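/- The right-hand side R = ω₁* × ℕ of the plank V is not C-embedded in V: the continuous function R → ℝ defined by (u, n) ↦ n has no continuous extension to V. -/

import Mathlib

open Set Topology

/-- A subset `A` of a topological space `X` is *C-embedded* if every continuous
real-valued function on `A` extends to a continuous real-valued function on `X`. -/
def CEmbedded {X : Type*} [TopologicalSpace X] (A : Set X) : Prop :=
  ∀ f : C(A, ℝ), ∃ g : C(X, ℝ), ∀ a : A, g ↑a = f a

/-- A subset `A` of a topological space `X` is *C*-embedded* if every *bounded* continuous
real-valued function on `A` extends to a continuous real-valued function on `X`. -/
def CstarEmbedded {X : Type*} [TopologicalSpace X] (A : Set X) : Prop :=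
  ∀ f : C(A, ℝ), (∃ M : ℝ, ∀ a : A, |f a| ≤ M) → ∃ g : C(X, ℝ), ∀ a : A, g ↑a = f a

/-- `ω₁`, the set of countable ordinals, as a type carrying the discrete topology. -/
def W1 : Type := (Cardinal.aleph 1).ord.ToType

instance : TopologicalSpace W1 := ⊥
instance : DiscreteTopology W1 := ⟨rfl⟩

/-- The Stone–Čech compactification `βω₁` of the discrete space `ω₁`. -/
abbrev betaW : Type := StoneCech W1

/-- The Stone–Čech remainder `ω₁* = βω₁ \ ω₁`. -/
def W1star : Set betaW := (Set.range (stoneCechUnit : W1 → betaW))ᶜ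

/-- The Stone–Čech compactification `βℕ` of the discrete space `ℕ`. -/
abbrev betaN : Type := StoneCech ℕ

/-- The Stone–Čech remainder `ℕ* = βℕ \ ℕ`. -/
def Nstar : Set betaN := (Set.range (stoneCechUnit : ℕ → betaN))ᶜ

/-- The plank `V`: the subspace `(βω₁ × βℕ) \ (ω₁* × ℕ*)` of `βω₁ × βℕ`. -/
abbrev V : Type := {p : betaW × betaN // ¬ (p.1 ∈ W1star ∧ p.2 ∈ Nstar)}

/-- The right-hand side `R = ω₁* × ℕ` of the plank `V`, as a subset of `V`. -/
def Rside : Set V :=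
  {p : V | p.1.1 ∈ W1star ∧ p.1.2 ∈ Set.range (stoneCechUnit : ℕ → betaN)}

/-- The point `(u, n)` of the right-hand side of `V`, for `u ∈ βω₁` and `n ∈ ℕ`. -/
def VmkR (u : betaW) (n : ℕ) : V :=
  ⟨(u, stoneCechUnit n), fun h => h.2 ⟨n, rfl⟩⟩

/-!
Suppose `g` extends `(u, n) ↦ n`. For fixed `n`, the function `u ↦ g (u, n) - n` on `βω₁` vanishes
on `ω₁*`; each set `{ε ≤ |g (·, n) - n|}` is then a compact subset of the discrete part `ω₁` of
`βω₁`, hence finite, so `g (a, n) ≠ n` for only countably many `a ∈ ω₁`. As `ω₁` is uncountable,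
some `a ∈ ω₁` has `g (a, n) = n` for every `n`. But `{a} × βℕ ⊆ V` is compact, so `g (a, ·)` is
bounded. The function `(u, n) ↦ n` is continuous on `R` because `ℕ` is open and discrete in `βℕ`,
so `R` is not C-embedded either.
-/

section StoneCech

variable {α : Type*} [TopologicalSpace α] [DiscreteTopology α]

/-- An open set cutting out `{stoneCechUnit a}` from the dense range of `stoneCechUnit` lies in
its closure. -/
lemma isOpen_singleton_stoneCechUnit (a : α) : IsOpen {stoneCechUnit a} := by
  obtain ⟨U, hU, hUa⟩ := isInducing_stoneCechUnit.isOpen_iff.1 (isOpen_discrete {a})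
  have ha : stoneCechUnit a ∈ U := show a ∈ stoneCechUnit ⁻¹' U from hUa ▸ mem_singleton a
  have hUrange : U ∩ range stoneCechUnit = {stoneCechUnit a} := by
    ext w
    constructor
    · rintro ⟨hw, b, rfl⟩
      have hb : b ∈ ({a} : Set α) := hUa ▸ hw
      rw [mem_singleton_iff.1 hb, mem_singleton_iff]
    · rintro rfl
      exact ⟨ha, a, rfl⟩
  have hsub : U ⊆ {stoneCechUnit a} := by
    simpa [hUrange] using denseRange_stoneCechUnit.open_subset_closure_inter hU
  rwa [← hsub.antisymm (singleton_subset_iff.2 ha)]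

lemma continuousAt_stoneCechUnit {β : Type*} [TopologicalSpace β] (f : StoneCech α → β)
    (a : α) : ContinuousAt f (stoneCechUnit a) := by
  rw [ContinuousAt, (isOpen_singleton_iff_nhds_eq_pure _).1 (isOpen_singleton_stoneCechUnit a)]
  exact tendsto_pure_nhds f _

lemma IsCompact.finite_of_subset_range_stoneCechUnit {K : Set (StoneCech α)} (hK : IsCompact K)
    (hKrange : K ⊆ range stoneCechUnit) : K.Finite := by
  refine hK.finite (IsDiscrete.of_nhdsWithin fun w hw => ?_)
  obtain ⟨a, rfl⟩ := hKrange hw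
  exact nhdsWithin_le_nhds.trans
    ((isOpen_singleton_iff_nhds_eq_pure _).1 (isOpen_singleton_stoneCechUnit a)).le

lemma Continuous.countable_support_of_eqOn_compl_range_stoneCechUnit {f : StoneCech α → ℝ}
    (hf : Continuous f) (h0 : EqOn f 0 (range stoneCechUnit)ᶜ) :
    (Function.support f).Countable := by
  have hlevel : ∀ k : ℕ, {w | 1 / ((k : ℝ) + 1) ≤ |f w|}.Finite := fun k =>
    (isClosed_le continuous_const hf.abs).isCompact.finite_of_subset_range_stoneCechUnit
      fun w hw => by_contra fun hnot => by
        have hle : 1 / ((k : ℝ) + 1) ≤ |f w| := hw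
        rw [h0 hnot, Pi.zero_apply, abs_zero] at hle
        exact (Nat.one_div_pos_of_nat.trans_le hle).false
  refine (countable_iUnion fun k => (hlevel k).countable).mono fun w hw => ?_
  obtain ⟨k, hk⟩ := exists_nat_one_div_lt (abs_pos.2 hw)
  exact mem_iUnion.2 ⟨k, hk.le⟩

end StoneCech

instance : Uncountable W1 := by
  have hcard : Cardinal.mk W1 = Cardinal.aleph 1 := Cardinal.mk_ord_toType _
  rw [← Cardinal.aleph0_lt_mk_iff, hcard]
  exact Cardinal.aleph0_lt_aleph_one

lemma continuous_VmkR_left (n : ℕ) : Continuous fun u => VmkR u n :=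
  (continuous_id.prodMk continuous_const).subtype_mk _

lemma exists_forall_eq_natCast_of_eqOn_W1star (g : C(V, ℝ))
    (hg : ∀ u ∈ W1star, ∀ n : ℕ, g (VmkR u n) = n) :
    ∃ a : W1, ∀ n : ℕ, g (VmkR (stoneCechUnit a) n) = n := by
  have hcount : ∀ n : ℕ,
      (Function.support fun u => g (VmkR u n) - n).Countable := fun n =>
    ((g.continuous.comp (continuous_VmkR_left n)).sub continuous_const
      ).countable_support_of_eqOn_compl_range_stoneCechUnit fun u hu => sub_eq_zero.2 (hg u hu n)
  set bad := ⋃ n : ℕ, stoneCechUnit ⁻¹' Function.support fun u => g (VmkR u n) - n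
  have hbad : bad.Countable :=
    countable_iUnion fun n => (hcount n).preimage injective_stoneCechUnit_of_t35Space
  obtain ⟨a, ha⟩ := (ne_univ_iff_exists_notMem bad).1 fun h => not_countable_univ (h ▸ hbad)
  exact ⟨a, fun n => sub_eq_zero.1 (not_not.1 fun h => ha (mem_iUnion.2 ⟨n, h⟩))⟩

lemma not_exists_continuousMap_V_eq_natCast_on_Rside :
    ¬ ∃ g : C(V, ℝ), ∀ u : betaW, u ∈ W1star → ∀ n : ℕ, g (VmkR u n) = (n : ℝ) := by
  rintro ⟨g, hg⟩
  obtain ⟨a, ha⟩ := exists_forall_eq_natCast_of_eqOn_W1star g hg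
  let slice : betaN → ℝ := fun q => g ⟨(stoneCechUnit a, q), fun h => h.1 ⟨a, rfl⟩⟩
  have hslice : Continuous slice :=
    g.continuous.comp ((continuous_const.prodMk continuous_id).subtype_mk _)
  obtain ⟨M, hM⟩ := (isCompact_range hslice).bddAbove
  obtain ⟨n, hn⟩ := exists_nat_gt M
  have : (n : ℝ) ≤ M := ha n ▸ hM ⟨stoneCechUnit n, rfl⟩
  linarith

lemma exists_continuousMap_Rside_eq_natCast :
    ∃ f : C(Rside, ℝ), ∀ u (hu : u ∈ W1star) (n : ℕ), f ⟨VmkR u n, hu, n, rfl⟩ = n := by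
  obtain ⟨index, hindex⟩ : ∃ index : betaN → ℝ, ∀ n : ℕ, index (stoneCechUnit n) = n :=
    ⟨fun w => (Function.invFun stoneCechUnit w : ℕ), fun n => by
      simp only [Function.leftInverse_invFun injective_stoneCechUnit_of_t35Space n]⟩
  have hproj : Continuous fun p : Rside => p.1.1.2 :=
    continuous_snd.comp (continuous_subtype_val.comp continuous_subtype_val)
  refine ⟨⟨fun p => index p.1.1.2, continuous_iff_continuousAt.2 fun p => ?_⟩,
    fun u _ n => hindex n⟩
  obtain ⟨n, hn⟩ := p.2.2
  exact ContinuousAt.comp (g := index) (hn ▸ continuousAt_stoneCechUnit index n)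
    hproj.continuousAt

/-- The right-hand side `R = ω₁* × ℕ` of the plank `V` is not C-embedded in
`V`: the continuous function `(u, n) ↦ n` on `R` has no continuous extension to `V`. -/
theorem statement11 :
    ¬ CEmbedded Rside ∧
    ¬ ∃ g : C(V, ℝ), ∀ u : betaW, u ∈ W1star → ∀ n : ℕ, g (VmkR u n) = (n : ℝ) := by
  refine ⟨fun hCE => ?_, not_exists_continuousMap_V_eq_natCast_on_Rside⟩
  obtain ⟨f, hf⟩ := exists_continuousMap_Rside_eq_natCast
  obtain ⟨g, hg⟩ := hCE f
  exact not_exists_continuousMap_V_eq_natCast_on_Rside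
    ⟨g, fun u hu n => (hg ⟨_, hu, n, rfl⟩).trans (hf u hu n)⟩
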